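/- arXiv:2401.12110 — 3 statements merged into one kernel-verified Lean document; each statement's English description precedes it below -/
import Mathlib

section
/- For every real x > 0, −∑_{k=1}^∞ ψ(2k+1) x^k / Γ(2k+1) = cosh(√x)·(Chi(√x) − ln √x) − Shi(√x)·sinh(√x) − γ. (This is the value (2.10) of the derivative of the integral Mittag-Leffler function with respect to α at α = 2, β = 1.) -/
open scoped BigOperators

/-- The digamma function `ψ(x) = Γ'(x)/Γ(x)`. -/
noncomputable def digamma (x : ℝ) : ℝ := deriv Real.Gamma x / Real.Gamma x

/-- The hyperbolic sine integral `Shi(y) = ∫₀^y sinh t / t dt`. -/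
noncomputable def Shi (y : ℝ) : ℝ := ∫ t in (0 : ℝ)..y, Real.sinh t / t

/-- The hyperbolic cosine integral `Chi(y) = γ + ln y − ∫₀^y (1 − cosh t)/t dt`. -/
noncomputable def Chi (y : ℝ) : ℝ :=
  Real.eulerMascheroniConstant + Real.log y - ∫ t in (0 : ℝ)..y, (1 - Real.cosh t) / t

/-!
With `y = √x`, `ψ(2k+1) = -γ + H_{2k}` splits the series into `-γ (cosh y - 1)` and
`∑ H_{2k} y^{2k}/(2k)!`. Writing `H_n = ∫₀¹ (1 - sⁿ)/(1 - s) ds` and summing under the integral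
turns the latter into `∫₀¹ (cosh y - cosh (y s))/(1 - s) ds`; the substitution `t = y (1 - s)`
and the addition formula for `cosh (y - t)` express it through `Shi y` and `Chi y`.
-/

open MeasureTheory Finset Nat Real
open scoped Interval

theorem digamma_nat_add_one (n : ℕ) : digamma (n + 1) = -eulerMascheroniConstant + harmonic n := by
  rw [digamma, deriv_Gamma_nat, Gamma_nat_eq_factorial, mul_div_cancel_left₀]
  exact Nat.cast_ne_zero.2 n.factorial_ne_zero

-- `f t / t` agrees with the continuous function `dslope f 0` away from `t = 0`.
theorem intervalIntegrable_div_self_of_differentiableAt {f : ℝ → ℝ} (hf : Continuous f)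
    (hf₀ : DifferentiableAt ℝ f 0) (h₀ : f 0 = 0) (a b : ℝ) :
    IntervalIntegrable (fun t => f t / t) volume a b := by
  have hslope : Continuous (dslope f 0) :=
    continuousOn_univ.1 <| (continuousOn_dslope Filter.univ_mem).2 ⟨hf.continuousOn, hf₀⟩
  refine hslope.intervalIntegrable a b |>.congr_ae <| ae_restrict_of_ae ?_
  filter_upwards [compl_mem_ae_iff.2 (measure_singleton (μ := volume) (0 : ℝ))] with t ht
  rw [dslope_of_ne f ht, slope_def_field, h₀, sub_zero, sub_zero]

theorem integral_geom_sum_eq_harmonic (n : ℕ) :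
    ∫ s in (0 : ℝ)..1, ∑ m ∈ range n, s ^ m = harmonic n := by
  rw [intervalIntegral.integral_finsetSum fun m _ => intervalIntegral.intervalIntegrable_pow m,
    harmonic]
  push_cast
  refine sum_congr rfl fun m _ => ?_
  simp [integral_pow]

-- Dominated convergence, with `|c k| * e k` bounding `c k * ∑_{m < e k} s ^ m` on `[0, 1]`.
theorem hasSum_mul_harmonic {c : ℕ → ℝ} {e : ℕ → ℕ} (hc : Summable fun k => |c k| * e k) :
    HasSum (fun k => c k * harmonic (e k))
      (∫ s in (0 : ℝ)..1, (∑' k, c k * (1 - s ^ e k)) / (1 - s)) := by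
  have hbound : ∀ k, ∀ s ∈ Ι (0 : ℝ) 1, ‖c k * ∑ m ∈ range (e k), s ^ m‖ ≤ |c k| * e k := by
    intro k s hs
    rw [Set.uIoc_of_le zero_le_one] at hs
    rw [norm_mul, Real.norm_eq_abs,
      Real.norm_of_nonneg (sum_nonneg fun m _ => pow_nonneg hs.1.le m)]
    gcongr
    simpa using sum_le_card_nsmul (range (e k)) _ 1 fun m _ => pow_le_one₀ hs.1.le hs.2
  have hgeom : ∀ k, ∀ s : ℝ, s ≠ 1 →
      c k * ∑ m ∈ range (e k), s ^ m = c k * (1 - s ^ e k) / (1 - s) := by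
    intro k s hs
    rw [geom_sum_eq hs, mul_div_assoc, ← neg_div_neg_eq, neg_sub, neg_sub]
  simp_rw [← integral_geom_sum_eq_harmonic, ← intervalIntegral.integral_const_mul]
  refine intervalIntegral.hasSum_integral_of_dominated_convergence (fun k _ => |c k| * e k)
    (fun k => ?_) (fun k => ae_of_all _ (hbound k)) (ae_of_all _ fun _ _ => hc)
    intervalIntegrable_const ?_
  · exact (continuous_const.mul (continuous_finsetSum _ fun m _ => continuous_pow m))
      |>.aestronglyMeasurable
  · filter_upwards [compl_mem_ae_iff.2 (measure_singleton (μ := volume) (1 : ℝ))] with s hs1 hs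
    have hsum := (hc.of_norm_bounded (hbound · s hs)).hasSum
    rwa [tsum_congr (hgeom · s hs1), tsum_div_const] at hsum

theorem Real.hasSum_cosh_sub_one (y : ℝ) :
    HasSum (fun k : ℕ => y ^ (2 * k + 2) / (2 * k + 2)!) (cosh y - 1) := by
  simpa [mul_add] using (hasSum_nat_add_iff' 1).2 (Real.hasSum_cosh y)

theorem Real.summable_abs_pow_div_factorial_mul (y : ℝ) :
    Summable fun k : ℕ => |y ^ (2 * k + 2) / (2 * k + 2)!| * ((2 * k + 2 : ℕ) : ℝ) := by
  have hodd : Summable fun k : ℕ => |y| ^ (2 * k + 1) / (2 * k + 1)! :=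
    (Real.summable_pow_div_factorial |y|).comp_injective fun a b h => by simpa using h
  refine (hodd.mul_left |y|).congr fun k => ?_
  rw [abs_div, abs_pow, Nat.abs_cast, factorial_succ (2 * k + 1)]
  push_cast
  field_simp
  ring

theorem Real.hasSum_cosh_coeff_mul_harmonic (y : ℝ) :
    HasSum (fun k : ℕ => y ^ (2 * k + 2) / (2 * k + 2)! * harmonic (2 * k + 2))
      (∫ s in (0 : ℝ)..1, (cosh y - cosh (y * s)) / (1 - s)) := by
  convert hasSum_mul_harmonic (Real.summable_abs_pow_div_factorial_mul y) using 4 with s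
  have h := (hasSum_cosh_sub_one y).sub (hasSum_cosh_sub_one (y * s))
  rw [sub_sub_sub_cancel_right] at h
  refine (h.congr_fun fun k => ?_).tsum_eq.symm
  ring

theorem integral_cosh_sub_cosh_mul_div_one_sub {y : ℝ} (hy : y ≠ 0) :
    ∫ s in (0 : ℝ)..1, (cosh y - cosh (y * s)) / (1 - s) =
      sinh y * Shi y + cosh y * ∫ t in (0 : ℝ)..y, (1 - cosh t) / t := by
  have hsinh := intervalIntegrable_div_self_of_differentiableAt continuous_sinh
    (differentiable_sinh 0) sinh_zero 0 y
  have hcosh := intervalIntegrable_div_self_of_differentiableAt (f := fun t => 1 - cosh t)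
    (by fun_prop) (by fun_prop) (by simp) 0 y
  -- both sides vanish at `s = 1`, so this holds everywhere
  have hsubst : ∀ s : ℝ, (cosh y - cosh (y * s)) / (1 - s) =
      y * ((cosh y - cosh (y - (y - y * s))) / (y - y * s)) := by
    intro s
    rw [sub_sub_cancel, ← mul_one_sub, ← mul_div_assoc, mul_div_mul_left _ _ hy]
  have hsplit : ∀ t : ℝ, (cosh y - cosh (y - t)) / t =
      sinh y * (sinh t / t) + cosh y * ((1 - cosh t) / t) := by
    intro t
    rw [cosh_sub]
    ring
  simp_rw [hsubst, intervalIntegral.integral_const_mul]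
  rw [intervalIntegral.integral_comp_sub_mul (fun t => (cosh y - cosh (y - t)) / t) hy,
    mul_one, mul_zero, sub_self, sub_zero, smul_eq_mul, mul_inv_cancel_left₀ hy]
  simp_rw [hsplit]
  rw [intervalIntegral.integral_add (hsinh.const_mul _) (hcosh.const_mul _),
    intervalIntegral.integral_const_mul, intervalIntegral.integral_const_mul, Shi]

/-- **Value (2.10)**: for every real `x > 0`,
`−∑_{k=1}^∞ ψ(2k+1) x^k / Γ(2k+1) = cosh √x (Chi √x − ln √x) − Shi √x · sinh √x − γ`. -/
theorem integral_mittagLeffler_alpha_deriv_two_one (x : ℝ) (hx : 0 < x) :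
    -∑' k : ℕ,
        digamma (2 * ((k : ℝ) + 1) + 1) * x ^ (k + 1) / Real.Gamma (2 * ((k : ℝ) + 1) + 1) =
      Real.cosh (Real.sqrt x) * (Chi (Real.sqrt x) - Real.log (Real.sqrt x)) -
        Shi (Real.sqrt x) * Real.sinh (Real.sqrt x) - Real.eulerMascheroniConstant := by
  set y := √x
  have hy : y ≠ 0 := (Real.sqrt_pos.2 hx).ne'
  have hterm : ∀ k : ℕ,
      digamma (2 * ((k : ℝ) + 1) + 1) * x ^ (k + 1) / Gamma (2 * ((k : ℝ) + 1) + 1) =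
        -eulerMascheroniConstant * (y ^ (2 * k + 2) / (2 * k + 2)!) +
          y ^ (2 * k + 2) / (2 * k + 2)! * harmonic (2 * k + 2) := by
    intro k
    have hcast : 2 * ((k : ℝ) + 1) + 1 = ((2 * k + 2 : ℕ) : ℝ) + 1 := by push_cast; ring
    rw [hcast, digamma_nat_add_one, Gamma_nat_eq_factorial, ← Real.sq_sqrt hx.le, ← pow_mul,
      mul_add_one]
    ring
  rw [tsum_congr hterm, (((hasSum_cosh_sub_one y).mul_left _).add
      (hasSum_cosh_coeff_mul_harmonic y)).tsum_eq, integral_cosh_sub_cosh_mul_div_one_sub hy, Chi]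
  ring
end

section
/- For every real x > 0, −∑_{k=1}^∞ ψ(4k) x^k / Γ(4k) = (x^{1/4}/8) · { 4 sinh(x^{1/4}) Chi(x^{1/4}) + sin(x^{1/4}) [ln x − 4 Ci(x^{1/4})] − 4 cosh(x^{1/4}) Shi(x^{1/4}) + 4 cos(x^{1/4}) Si(x^{1/4}) − sinh(x^{1/4}) ln x }. (This is the value (2.11) of the derivative of the integral Mittag-Leffler function with respect to α at α = 4, β = 0.) -/
open scoped BigOperators

/-- The sine integral `Si(y) = ∫₀^y sin t / t dt`. -/
noncomputable def Si (y : ℝ) : ℝ := ∫ t in (0 : ℝ)..y, Real.sin t / t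

/-- The cosine integral `Ci(y) = γ + ln y − ∫₀^y (1 − cos t)/t dt`. -/
noncomputable def Ci (y : ℝ) : ℝ :=
  Real.eulerMascheroniConstant + Real.log y - ∫ t in (0 : ℝ)..y, (1 - Real.cos t) / t

/-!
With `y = x^{1/4}` and `ψ(n + 1) = -γ + H_n`, the series is
`-γ y s(y) + y ∑ H_{4k+3} y^{4k+3}/(4k+3)!` where `s = (sinh - sin)/2 = ∑ y^{4k+3}/(4k+3)!`.
Since `H_n = ∫₀¹ (1 - tⁿ)/(1 - t) dt`, any series `∑ aᵢ H_{mᵢ} y^{mᵢ}` equals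
`∫₀¹ (f y - f (t y))/(1 - t) dt = ∫₀^y (f y - f (y - v))/v dv` with `f w = ∑ aᵢ w^{mᵢ}`.
For `f = s` the addition formulas for `sinh` and `sin` split this integrand into the integrands
of `Shi`, `Si`, `Chi` and `Ci`.
-/

open MeasureTheory Finset intervalIntegral Nat
open scoped Interval

lemma harmonic_eq_integral_geom_sum (n : ℕ) :
    (harmonic n : ℝ) = ∫ t in (0 : ℝ)..1, ∑ j ∈ range n, t ^ j := by
  rw [integral_finsetSum fun j _ => (continuous_pow j).intervalIntegrable 0 1]
  induction n with
  | zero => simp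
  | succ n ih => simp [harmonic_succ, sum_range_succ, ih, integral_pow]

lemma integral_sub_comp_mul_div_one_sub (f : ℝ → ℝ) {y : ℝ} (hy : y ≠ 0) :
    ∫ t in (0 : ℝ)..1, (f y - f (t * y)) / (1 - t) = ∫ v in (0 : ℝ)..y, (f y - f (y - v)) / v := by
  have hsubst := integral_comp_sub_mul (fun t => (f y - f (t * y)) / (1 - t)) (a := 0) (b := y)
    (inv_ne_zero hy) 1
  simp only [mul_zero, sub_zero, inv_mul_cancel₀ hy, sub_self, inv_inv, smul_eq_mul] at hsubst
  have hintegrand (v : ℝ) : (f y - f ((1 - y⁻¹ * v) * y)) / (1 - (1 - y⁻¹ * v)) =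
      y * ((f y - f (y - v)) / v) := by
    rw [sub_sub_cancel, show (1 - y⁻¹ * v) * y = y - v by field_simp, mul_comm y⁻¹ v, ← div_div,
      div_inv_eq_mul, mul_comm]
  simp only [hintegrand, intervalIntegral.integral_const_mul] at hsubst
  exact (mul_left_cancel₀ hy hsubst).symm

lemma hasSum_mul_pow_mul_geom_sum {ι : Type*} {a : ι → ℝ} {m : ι → ℕ} {y t : ℝ}
    (hsum : Summable fun i => a i * y ^ m i) (ht : |t| ≤ 1) (ht1 : t ≠ 1) :
    HasSum (fun i => a i * y ^ m i * ∑ j ∈ range (m i), t ^ j)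
      ((∑' i, a i * y ^ m i - ∑' i, a i * (t * y) ^ m i) / (1 - t)) := by
  have hsum_t : Summable fun i => a i * (t * y) ^ m i := by
    refine hsum.norm.of_norm_bounded fun i => ?_
    rw [mul_pow, norm_mul, norm_mul, norm_mul, norm_pow]
    gcongr
    exact mul_le_of_le_one_left (norm_nonneg _) (pow_le_one₀ (norm_nonneg t) ht)
  refine ((hsum.hasSum.sub hsum_t.hasSum).div_const (1 - t)).congr_fun fun i => ?_
  rw [geom_sum_eq ht1, mul_pow]
  field_simp [sub_ne_zero.2 ht1, sub_ne_zero.2 ht1.symm]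
  ring

theorem hasSum_mul_harmonic_mul_pow {ι : Type*} [Countable ι] {a : ι → ℝ} {m : ι → ℕ} {y : ℝ}
    (hy : y ≠ 0) (hsum : Summable fun i => a i * y ^ m i)
    (hsum' : Summable fun i => a i * m i * y ^ m i) :
    HasSum (fun i => a i * harmonic (m i) * y ^ m i)
      (∫ v in (0 : ℝ)..y, ((∑' i, a i * y ^ m i) - ∑' i, a i * (y - v) ^ m i) / v) := by
  set f : ℝ → ℝ := fun w => ∑' i, a i * w ^ m i
  rw [← integral_sub_comp_mul_div_one_sub f hy]
  have habs_le_one : ∀ t ∈ Ι (0 : ℝ) 1, |t| ≤ 1 := fun t ht => by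
    rw [Set.uIoc_of_le zero_le_one] at ht
    exact abs_le.2 ⟨by linarith [ht.1], ht.2⟩
  have hgeom_le (n : ℕ) {t : ℝ} (ht : t ∈ Ι (0 : ℝ) 1) : ‖∑ j ∈ range n, t ^ j‖ ≤ n := by
    calc ‖∑ j ∈ range n, t ^ j‖ ≤ ∑ j ∈ range n, ‖t ^ j‖ := norm_sum_le _ _
      _ ≤ ∑ j ∈ range n, (1 : ℝ) := sum_le_sum fun j _ => by
        rw [norm_pow]; exact pow_le_one₀ (norm_nonneg t) (habs_le_one t ht)
      _ = n := by simp
  refine (intervalIntegral.hasSum_integral_of_dominated_convergence (μ := volume)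
    (F := fun i t => a i * y ^ m i * ∑ j ∈ range (m i), t ^ j)
    (fun i _ => ‖a i * m i * y ^ m i‖) (fun i => by fun_prop) ?_ ?_ ?_ ?_).congr_fun fun i => ?_
  · refine fun i => ae_of_all _ fun t ht => ?_
    have := mul_le_mul_of_nonneg_left (hgeom_le (m i) ht) (norm_nonneg (a i * y ^ m i))
    simp only [norm_mul, Real.norm_natCast] at this ⊢
    linarith
  · exact ae_of_all _ fun _ _ => hsum'.norm
  · exact intervalIntegrable_const
  · filter_upwards [Measure.ae_ne volume 1] with t ht1 ht
    exact hasSum_mul_pow_mul_geom_sum hsum (habs_le_one t ht) ht1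
  · rw [intervalIntegral.integral_const_mul, ← harmonic_eq_integral_geom_sum]
    ring

lemma hasSum_pow_four_mul_add_three_div_factorial (y : ℝ) :
    HasSum (fun k : ℕ => y ^ (4 * k + 3) / (4 * k + 3)!) ((Real.sinh y - Real.sin y) / 2) := by
  -- `(1 - (-1)ⁿ)/2` kills the even-indexed terms `y^{4k+1}/(4k+1)!`
  have hodd : HasSum (fun n : ℕ => (1 - (-1) ^ n) / 2 * (y ^ (2 * n + 1) / (2 * n + 1)!))
      ((Real.sinh y - Real.sin y) / 2) :=
    ((Real.hasSum_sinh y).sub (Real.hasSum_sin y)).div_const 2 |>.congr_fun fun n => by ring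
  rw [← ((add_left_injective 1).comp (mul_right_injective₀ two_ne_zero)).hasSum_iff] at hodd
  · refine hodd.congr_fun fun k => ?_
    simp [pow_succ, pow_mul, mul_add, ← mul_assoc]
  · intro n hn
    have heven : Even n := Nat.not_odd_iff_even.1 fun ⟨k, hk⟩ => hn ⟨k, hk.symm⟩
    simp [heven.neg_one_pow]

lemma intervalIntegrable_div_self {h : ℝ → ℝ} (hc : Continuous h) (hd : DifferentiableAt ℝ h 0)
    (h0 : h 0 = 0) (a b : ℝ) : IntervalIntegrable (fun t => h t / t) volume a b := by
  have hslope : Continuous (dslope h 0) :=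
    continuousOn_univ.1 ((continuousOn_dslope Filter.univ_mem).2 ⟨hc.continuousOn, hd⟩)
  refine (hslope.intervalIntegrable a b).congr_ae (ae_restrict_of_ae ?_)
  filter_upwards [Measure.ae_ne volume 0] with t ht
  rw [dslope_of_ne h ht, slope_def_field, h0, sub_zero, sub_zero]

lemma hasSum_harmonic_mul_pow_four_mul_add_three_div_factorial {y : ℝ} (hy : y ≠ 0) :
    HasSum (fun k : ℕ => harmonic (4 * k + 3) * (y ^ (4 * k + 3) / (4 * k + 3)!))
      ((Real.sinh y * (∫ t in (0 : ℝ)..y, (1 - Real.cosh t) / t) +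
        Real.cosh y * (∫ t in (0 : ℝ)..y, Real.sinh t / t) -
        Real.sin y * (∫ t in (0 : ℝ)..y, (1 - Real.cos t) / t) -
        Real.cos y * (∫ t in (0 : ℝ)..y, Real.sin t / t)) / 2) := by
  have hs (w : ℝ) : ∑' k : ℕ, ((4 * k + 3)! : ℝ)⁻¹ * w ^ (4 * k + 3) =
      (Real.sinh w - Real.sin w) / 2 := by
    simpa only [inv_mul_eq_div] using (hasSum_pow_four_mul_add_three_div_factorial w).tsum_eq
  have hsum : Summable fun k : ℕ => ((4 * k + 3)! : ℝ)⁻¹ * y ^ (4 * k + 3) := by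
    simpa only [inv_mul_eq_div] using (hasSum_pow_four_mul_add_three_div_factorial y).summable
  have hsum' : Summable fun k : ℕ =>
      ((4 * k + 3)! : ℝ)⁻¹ * (4 * k + 3 : ℕ) * y ^ (4 * k + 3) := by
    refine (((Real.summable_pow_div_factorial y).comp_injective
      ((add_left_injective 2).comp (mul_right_injective₀ four_ne_zero))).mul_left y).congr
      fun k => ?_
    simp only [Function.comp_apply, factorial_succ (4 * k + 2), pow_succ]
    push_cast
    field_simp
    ring
  have h := hasSum_mul_harmonic_mul_pow hy hsum hsum'
  have hsplit (v : ℝ) :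
      ((Real.sinh y - Real.sin y) / 2 - (Real.sinh (y - v) - Real.sin (y - v)) / 2) / v =
      (Real.sinh y * ((1 - Real.cosh v) / v) + Real.cosh y * (Real.sinh v / v) -
        Real.sin y * ((1 - Real.cos v) / v) - Real.cos y * (Real.sin v / v)) / 2 := by
    rw [Real.sinh_sub, Real.sin_sub]
    ring
  have hcosh := intervalIntegrable_div_self (h := fun t => 1 - Real.cosh t) (by fun_prop)
    (by fun_prop) (by simp) 0 y
  have hsinh := intervalIntegrable_div_self Real.continuous_sinh (by fun_prop) Real.sinh_zero 0 y
  have hcos := intervalIntegrable_div_self (h := fun t => 1 - Real.cos t) (by fun_prop)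
    (by fun_prop) (by simp) 0 y
  have hsin := intervalIntegrable_div_self Real.continuous_sin (by fun_prop) Real.sin_zero 0 y
  simp only [hs, hsplit, intervalIntegral.integral_div] at h
  rw [intervalIntegral.integral_sub (((hcosh.const_mul _).add (hsinh.const_mul _)).sub
      (hcos.const_mul _)) (hsin.const_mul _),
    intervalIntegral.integral_sub ((hcosh.const_mul _).add (hsinh.const_mul _)) (hcos.const_mul _),
    intervalIntegral.integral_add (hcosh.const_mul _) (hsinh.const_mul _)] at h
  simp only [intervalIntegral.integral_const_mul] at h
  exact h.congr_fun fun k => by ring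

lemma digamma_natCast_add_one (n : ℕ) :
    digamma (n + 1) = -Real.eulerMascheroniConstant + harmonic n := by
  rw [digamma, Real.deriv_Gamma_nat, Real.Gamma_nat_eq_factorial]
  field_simp

/-- **Value (2.11)**: for every real `x > 0`,
`−∑_{k=1}^∞ ψ(4k) x^k / Γ(4k) = (x^{1/4}/8) { 4 sinh(x^{1/4}) Chi(x^{1/4})`
`+ sin(x^{1/4})[ln x − 4 Ci(x^{1/4})] − 4 cosh(x^{1/4}) Shi(x^{1/4})`
`+ 4 cos(x^{1/4}) Si(x^{1/4}) − sinh(x^{1/4}) ln x }`. -/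
theorem integral_mittagLeffler_alpha_deriv_four_zero (x : ℝ) (hx : 0 < x) :
    -∑' k : ℕ, digamma (4 * ((k : ℝ) + 1)) * x ^ (k + 1) / Real.Gamma (4 * ((k : ℝ) + 1)) =
      x ^ ((1 : ℝ) / 4) / 8 *
        (4 * Real.sinh (x ^ ((1 : ℝ) / 4)) * Chi (x ^ ((1 : ℝ) / 4)) +
          Real.sin (x ^ ((1 : ℝ) / 4)) * (Real.log x - 4 * Ci (x ^ ((1 : ℝ) / 4))) -
          4 * Real.cosh (x ^ ((1 : ℝ) / 4)) * Shi (x ^ ((1 : ℝ) / 4)) +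
          4 * Real.cos (x ^ ((1 : ℝ) / 4)) * Si (x ^ ((1 : ℝ) / 4)) -
          Real.sinh (x ^ ((1 : ℝ) / 4)) * Real.log x) := by
  set y := x ^ ((1 : ℝ) / 4)
  have hy : 0 < y := Real.rpow_pos_of_pos hx _
  have hx_eq : x = y ^ 4 := by
    rw [← Real.rpow_natCast, ← Real.rpow_mul hx.le]
    norm_num
  have hlog : Real.log x = 4 * Real.log y := by rw [hx_eq, Real.log_pow]; norm_num
  have hterm (k : ℕ) :
      digamma (4 * ((k : ℝ) + 1)) * x ^ (k + 1) / Real.Gamma (4 * ((k : ℝ) + 1)) =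
        -Real.eulerMascheroniConstant * y * (y ^ (4 * k + 3) / (4 * k + 3)!) +
          y * (harmonic (4 * k + 3) * (y ^ (4 * k + 3) / (4 * k + 3)!)) := by
    have hcast : 4 * ((k : ℝ) + 1) = ((4 * k + 3 : ℕ) : ℝ) + 1 := by push_cast; ring
    rw [hcast, digamma_natCast_add_one, Real.Gamma_nat_eq_factorial, hx_eq, ← pow_mul,
      show 4 * (k + 1) = 4 * k + 3 + 1 by ring, pow_succ]
    ring
  have hsum := ((hasSum_pow_four_mul_add_three_div_factorial y).mul_left
    (-Real.eulerMascheroniConstant * y)).add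
    ((hasSum_harmonic_mul_pow_four_mul_add_three_div_factorial hy.ne').mul_left y)
  rw [tsum_congr hterm, hsum.tsum_eq, hlog]
  simp only [Chi, Ci, Shi, Si]
  ring
end

section
/- Let q ≥ 1 be an integer and let β be a real number such that β + h/q is not a nonpositive integer for any h ∈ {0, 1, …, q−1}. Then for every real x, −∑_{k=0}^∞ ψ(k/q + β) x^k / Γ(k/q + β) = −∑_{h=0}^{q−1} (x^h / Γ(h/q + β)) · [ ψ(h/q + β) + Q(h/q + β, x^q) ], where Q(a, y) = ∑_{k=1}^∞ y^k ψ(k + a)/(a)_k. (This is Theorem 5.1: the reduction formula for the derivative of the two-parameter Mittag-Leffler function with respect to β at α = 1/q.) -/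
open scoped BigOperators

/-- `Q(a, y) = ∑_{k=1}^∞ y^k ψ(k + a) / (a)_k`, with `(a)_k` the Pochhammer symbol. -/
noncomputable def Q (a y : ℝ) : ℝ :=
  ∑' k : ℕ, y ^ (k + 1) * digamma (((k : ℝ) + 1) + a) / (ascPochhammer ℝ (k + 1)).eval a

/-!
Split the series by the residue `h` of `k` modulo `q`: for `k = q m + h` one has
`k/q + β = m + a` with `a = h/q + β`, and `Γ(m + a) = (a)_m Γ(a)`, so the class of `h`
sums to `x^h/Γ(a) · ∑_m (x^q)^m ψ(m + a)/(a)_m`, a series whose `m = 0` term is `ψ(a)`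
and whose tail is `Q(a, x^q)`. Each class converges absolutely:
`ψ(m + a) = ψ(a) + ∑_{j<m} 1/(a + j)` grows at most like `2^m`, and `z^m/(a)_m` is
summable for every `z` by the ratio test.
-/

open Filter Topology Finset

section ResidueClasses

variable {M : Type*} [AddCommMonoid M] [TopologicalSpace M]

theorem hasSum_indicator_mod_iff {f : ℕ → M} {q h : ℕ} (hh : h < q) {s : M} :
    HasSum ({n | n % q = h}.indicator f) s ↔ HasSum (fun m => f (q * m + h)) s := by
  have hg : Function.Injective fun m => q * m + h := fun m₁ m₂ e =>
    Nat.eq_of_mul_eq_mul_left (by omega) (Nat.add_right_cancel e)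
  have hcomp : {n | n % q = h}.indicator f ∘ (fun m => q * m + h) = fun m => f (q * m + h) :=
    funext fun m => Set.indicator_of_mem (by simp [Nat.mod_eq_of_lt hh]) f
  rw [← hg.hasSum_iff, hcomp]
  intro n hn
  refine Set.indicator_of_notMem (fun hmod => hn ⟨n / q, ?_⟩) f
  rw [← Set.mem_ofPred_eq.mp hmod]
  exact Nat.div_add_mod n q

theorem hasSum_of_hasSum_mul_add [ContinuousAdd M] {f : ℕ → M} {q : ℕ} (hq : 0 < q)
    {s : ℕ → M} (hs : ∀ h < q, HasSum (fun m => f (q * m + h)) (s h)) :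
    HasSum f (∑ h ∈ range q, s h) := by
  have hf : f = fun n => ∑ h ∈ range q, {n | n % q = h}.indicator f n := by
    funext n
    rw [sum_eq_single_of_mem (n % q) (mem_range.mpr (Nat.mod_lt n hq))]
    · exact (Set.indicator_of_mem (show n ∈ {m | m % q = n % q} from rfl) f).symm
    · exact fun h _ hne =>
        Set.indicator_of_notMem (fun hmod => hne (Set.mem_ofPred_eq.mp hmod).symm) f
  rw [hf]
  exact hasSum_sum fun h hh =>
    (hasSum_indicator_mod_iff (mem_range.mp hh)).mpr (hs h (mem_range.mp hh))

end ResidueClasses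

theorem tendsto_div_const_add_natCast (z a : ℝ) :
    Tendsto (fun n : ℕ => z / (a + n)) atTop (𝓝 0) :=
  tendsto_const_nhds.div_atTop (tendsto_atTop_add_const_left _ a tendsto_natCast_atTop_atTop)

theorem summable_pow_div_ascPochhammer_eval (a z : ℝ) :
    Summable fun m : ℕ => z ^ m / (ascPochhammer ℝ m).eval a := by
  refine summable_of_ratio_norm_eventually_le (r := 1 / 2) (by norm_num) ?_
  filter_upwards [(tendsto_div_const_add_natCast z a).norm.eventually
    (gt_mem_nhds (by norm_num : ‖(0 : ℝ)‖ < 1 / 2))] with n hn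
  have hstep : z ^ (n + 1) / (ascPochhammer ℝ (n + 1)).eval a =
      z ^ n / (ascPochhammer ℝ n).eval a * (z / (a + n)) := by
    rw [ascPochhammer_succ_eval, pow_succ, div_mul_div_comm]
  rw [hstep, norm_mul, mul_comm]
  exact mul_le_mul_of_nonneg_right hn.le (norm_nonneg _)

theorem Real.Gamma_nat_add {a : ℝ} (ha : ∀ n : ℕ, a ≠ -n) (m : ℕ) :
    Real.Gamma (m + a) = (ascPochhammer ℝ m).eval a * Real.Gamma a := by
  induction m with
  | zero => simp
  | succ m ih =>
    have hma : (m : ℝ) + a ≠ 0 := fun h => ha m (by linarith)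
    rw [Nat.cast_succ, add_right_comm, Real.Gamma_add_one hma, ih, ascPochhammer_succ_eval]
    ring

theorem Real.deriv_Gamma_add_one {x : ℝ} (hx : ∀ n : ℕ, x ≠ -n) :
    deriv Real.Gamma (x + 1) = Real.Gamma x + x * deriv Real.Gamma x := by
  have hx0 : x ≠ 0 := by simpa using hx 0
  have hfun : (fun y => Real.Gamma (y + 1)) =ᶠ[𝓝 x] fun y => y * Real.Gamma y := by
    filter_upwards [isOpen_ne.mem_nhds hx0] with y hy using Real.Gamma_add_one hy
  rw [← deriv_comp_add_const, hfun.deriv_eq]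
  simp [Real.differentiableAt_Gamma hx]

theorem digamma_add_one {x : ℝ} (hx : ∀ n : ℕ, x ≠ -n) :
    digamma (x + 1) = digamma x + x⁻¹ := by
  have hx0 : x ≠ 0 := by simpa using hx 0
  have hG : Real.Gamma x ≠ 0 := Real.Gamma_ne_zero hx
  rw [digamma, digamma, Real.deriv_Gamma_add_one hx, Real.Gamma_add_one hx0]
  field_simp
  ring

theorem exists_abs_digamma_nat_add_le {a : ℝ} (ha : ∀ n : ℕ, a ≠ -n) :
    ∃ C, ∀ m : ℕ, |digamma (m + a)| ≤ C * 2 ^ m := by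
  obtain ⟨c, hc⟩ := isBounded_iff_forall_norm_le.mp
    (Metric.isBounded_range_of_tendsto _ (tendsto_div_const_add_natCast 1 a))
  have hc' : ∀ n : ℕ, |((n : ℝ) + a)⁻¹| ≤ c := fun n => by
    simpa [add_comm] using hc _ ⟨n, rfl⟩
  have hc0 : 0 ≤ c := (abs_nonneg _).trans (hc' 0)
  refine ⟨|digamma a| + c, fun m => ?_⟩
  induction m with
  | zero => simpa using hc0
  | succ m ih =>
    have hma : ∀ n : ℕ, (m : ℝ) + a ≠ -n := fun n h => ha (n + m) (by push_cast; linarith)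
    have h2m : (1 : ℝ) ≤ 2 ^ m := one_le_pow₀ (by norm_num)
    rw [Nat.cast_succ, add_right_comm, digamma_add_one hma]
    calc |digamma (m + a) + ((m : ℝ) + a)⁻¹|
        ≤ (|digamma a| + c) * 2 ^ m + c := (abs_add_le _ _).trans (add_le_add ih (hc' m))
      _ ≤ (|digamma a| + c) * 2 ^ (m + 1) := by
        rw [pow_succ]; nlinarith [abs_nonneg (digamma a)]

theorem summable_pow_mul_digamma_div_ascPochhammer_eval {a : ℝ} (ha : ∀ n : ℕ, a ≠ -n)
    (y : ℝ) :
    Summable fun m : ℕ => y ^ m * digamma (m + a) / (ascPochhammer ℝ m).eval a := by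
  obtain ⟨C, hC⟩ := exists_abs_digamma_nat_add_le ha
  refine Summable.of_norm_bounded
    ((summable_pow_div_ascPochhammer_eval a (2 * y)).norm.mul_left C) fun m => ?_
  simp only [Real.norm_eq_abs, abs_div, abs_mul, abs_pow, abs_two]
  calc |y| ^ m * |digamma (m + a)| / |(ascPochhammer ℝ m).eval a|
      ≤ |y| ^ m * (C * 2 ^ m) / |(ascPochhammer ℝ m).eval a| := by gcongr; exact hC m
    _ = C * ((2 * |y|) ^ m / |(ascPochhammer ℝ m).eval a|) := by ring

theorem hasSum_digamma_add_Q {a : ℝ} (ha : ∀ n : ℕ, a ≠ -n) (y : ℝ) :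
    HasSum (fun m : ℕ => y ^ m * digamma (m + a) / (ascPochhammer ℝ m).eval a)
      (digamma a + Q a y) := by
  set g : ℕ → ℝ := fun m => y ^ m * digamma (m + a) / (ascPochhammer ℝ m).eval a
  have hs : Summable fun k => g (k + 1) :=
    (summable_nat_add_iff 1).mpr (summable_pow_mul_digamma_div_ascPochhammer_eval ha y)
  have h0 : g 0 = digamma a := by simp [g]
  have hQ : ∑' k, g (k + 1) = Q a y := by simp [g, Q]
  rw [← h0, ← hQ]
  exact hs.hasSum.zero_add

/-- **Theorem 5.1**: for an integer `q ≥ 1` and real `β` with `β + h/q` never a nonpositive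
integer for `h ∈ {0,…,q−1}`, for every real `x`,
`−∑_{k=0}^∞ ψ(k/q + β) x^k/Γ(k/q + β)
  = −∑_{h=0}^{q−1} (x^h/Γ(h/q + β)) [ψ(h/q + β) + Q(h/q + β, x^q)]`. -/
theorem mittagLeffler_beta_deriv_inv_nat (q : ℕ) (hq : 1 ≤ q) (β : ℝ)
    (hβ : ∀ h : ℕ, h < q → ∀ n : ℕ, β + (h : ℝ) / q ≠ -(n : ℝ)) (x : ℝ) :
    -∑' k : ℕ, digamma ((k : ℝ) / q + β) * x ^ k / Real.Gamma ((k : ℝ) / q + β) =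
      -∑ h ∈ Finset.range q,
        x ^ h / Real.Gamma ((h : ℝ) / q + β) *
          (digamma ((h : ℝ) / q + β) + Q ((h : ℝ) / q + β) (x ^ q)) := by
  set f : ℕ → ℝ :=
    fun k => digamma ((k : ℝ) / q + β) * x ^ k / Real.Gamma ((k : ℝ) / q + β)
  have hclass : ∀ h < q, HasSum (fun m => f (q * m + h))
      (x ^ h / Real.Gamma ((h : ℝ) / q + β) *
        (digamma ((h : ℝ) / q + β) + Q ((h : ℝ) / q + β) (x ^ q))) := by
    intro h hh
    have ha : ∀ n : ℕ, (h : ℝ) / q + β ≠ -n := fun n hn => hβ h hh n (by linarith)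
    have harg (m : ℕ) : ((q * m + h : ℕ) : ℝ) / q + β = m + ((h : ℝ) / q + β) := by
      have hq0 : (q : ℝ) ≠ 0 := Nat.cast_ne_zero.mpr (by omega)
      push_cast; field_simp; ring
    refine ((hasSum_digamma_add_Q ha (x ^ q)).mul_left
      (x ^ h / Real.Gamma ((h : ℝ) / q + β))).congr_fun fun m => ?_
    simp only [f, harg, Real.Gamma_nat_add ha, pow_add, pow_mul]
    ring
  rw [(hasSum_of_hasSum_mul_add (by omega) hclass).tsum_eq]
end
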